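/- arXiv:2108.00323 — 4 statements merged into one kernel-verified Lean document; each statement's English description precedes it below -/
import Mathlib

section
/- Let A be a locally C*-algebra with defining family of C*-seminorms {p_α}, and let π_α : A → A_α = A/ker(p_α) be the canonical quotient map onto the C*-completion with norm induced by p_α. Then an element a of A is α-positive (i.e., a = b*b + x with p_α(x) = 0 for some b, x in A) if and only if π_α(a) is a positive element of the C*-algebra A_α. -/
open scoped ComplexOrder InnerProductSpace

section LocallyCstarPrelude

/-- An upward filtered family of C*-seminorms on a unital complex *-algebra;
together with completeness this is the data of a locally C*-algebra. -/
structure LocalCstarSeminorms (Λ : Type) [Preorder Λ] (A : Type) [Ring A] [StarRing A]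
    [Algebra ℂ A] : Type where
  p : Λ → A → ℝ
  nonneg : ∀ α a, 0 ≤ p α a
  p_one : ∀ α, p α 1 = 1
  p_add : ∀ α a b, p α (a + b) ≤ p α a + p α b
  p_smul : ∀ α (c : ℂ) (a : A), p α (c • a) = ‖c‖ * p α a
  p_mul : ∀ α a b, p α (a * b) ≤ p α a * p α b
  p_star : ∀ α a, p α (star a) = p α a
  p_cstar : ∀ α a, p α (star a * a) = p α a ^ 2
  mono : ∀ ⦃α β⦄, α ≤ β → ∀ a, p α a ≤ p β a
  directed : ∀ α β : Λ, ∃ γ, α ≤ γ ∧ β ≤ γ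

namespace LocalCstarSeminorms

variable {Λ : Type} [Preorder Λ] {A : Type} [Ring A] [StarRing A] [Algebra ℂ A]

/-- `a ≥_α 0` : `a = b*b + x` with `p_α x = 0`. -/
def Pos (P : LocalCstarSeminorms Λ A) (α : Λ) (a : A) : Prop :=
  ∃ b x : A, a = star b * b + x ∧ P.p α x = 0

/-- `M ≥_α 0` in `M_n(A)`. -/
def MatPos (P : LocalCstarSeminorms Λ A) (α : Λ) {ι : Type} [Fintype ι]
    (M : Matrix ι ι A) : Prop :=
  ∃ B X : Matrix ι ι A, M = B.conjTranspose * B + X ∧ ∀ i j, P.p α (X i j) = 0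

/-- `p_α^n(M) ≤ C`, expressed through the C*-identity
`‖M‖ ≤ C ↔ [[C·1, M], [M*, C·1]] ≥ 0`. -/
def MatBddBy (P : LocalCstarSeminorms Λ A) (α : Λ) {ι : Type} [Fintype ι] [DecidableEq ι]
    (M : Matrix ι ι A) (C : ℝ) : Prop :=
  P.MatPos α (Matrix.fromBlocks ((C : ℂ) • (1 : Matrix ι ι A)) M
    M.conjTranspose ((C : ℂ) • (1 : Matrix ι ι A)))

end LocalCstarSeminorms

/-- A quantized domain in a Hilbert space `H`: an upward filtered family of closed
subspaces whose union is dense in `H`. -/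
structure QuantizedDomain (H : Type) [NormedAddCommGroup H] [InnerProductSpace ℂ H]
    (Ω : Type) [Preorder Ω] : Type where
  E : Ω → Submodule ℂ H
  isClosed : ∀ l, IsClosed (E l : Set H)
  mono : ∀ ⦃l m⦄, l ≤ m → E l ≤ E m
  directed : ∀ l m : Ω, ∃ k, E l ≤ E k ∧ E m ≤ E k
  dense : Dense (⋃ l, (E l : Set H))

namespace QuantizedDomain

variable {H : Type} [NormedAddCommGroup H] [InnerProductSpace ℂ H] {Ω : Type} [Preorder Ω]

/-- The union space `D = ⋃ H_l`. -/
def Dom (Q : QuantizedDomain H Ω) : Submodule ℂ H := ⨆ l, Q.E l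

/-- Membership in `C*_E(D)` for a linear operator on the union space: each `H_l` is
invariant, the restriction to each `H_l` is bounded, and each `H_l^⊥ ∩ D` is invariant. -/
def MemCED (Q : QuantizedDomain H Ω) (T : Q.Dom →ₗ[ℂ] Q.Dom) : Prop :=
  (∀ l, ∀ x : Q.Dom, (x : H) ∈ Q.E l → ((T x : Q.Dom) : H) ∈ Q.E l) ∧
  (∀ l, ∃ C : ℝ, 0 ≤ C ∧ ∀ x : Q.Dom, (x : H) ∈ Q.E l →
      ‖((T x : Q.Dom) : H)‖ ≤ C * ‖(x : H)‖) ∧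
  (∀ l, ∀ x : Q.Dom, (x : H) ∈ (Q.E l)ᗮ → ((T x : Q.Dom) : H) ∈ (Q.E l)ᗮ)

/-- `T'` is an adjoint of `T` on the union space. -/
def IsAdjoint (Q : QuantizedDomain H Ω) (T T' : Q.Dom →ₗ[ℂ] Q.Dom) : Prop :=
  ∀ x y : Q.Dom, ⟪((T x : Q.Dom) : H), (y : H)⟫_ℂ = ⟪(x : H), ((T' y : Q.Dom) : H)⟫_ℂ

/-- `‖T|_{H_l}‖ ≤ C`. -/
def BddAt (Q : QuantizedDomain H Ω) (l : Ω) (T : Q.Dom →ₗ[ℂ] Q.Dom) (C : ℝ) : Prop :=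
  ∀ x : Q.Dom, (x : H) ∈ Q.E l → ‖((T x : Q.Dom) : H)‖ ≤ C * ‖(x : H)‖

/-- `T ≥_l 0` : the restriction of `T` to `H_l` is a positive operator. -/
def PosAt (Q : QuantizedDomain H Ω) (l : Ω) (T : Q.Dom →ₗ[ℂ] Q.Dom) : Prop :=
  ∀ x : Q.Dom, (x : H) ∈ Q.E l → 0 ≤ ⟪(x : H), ((T x : Q.Dom) : H)⟫_ℂ

/-- Positivity at level `l` of a matrix of operators (positivity of the amplification
on `H_l^n`). -/
def MatPosAt (Q : QuantizedDomain H Ω) (l : Ω) {ι : Type} [Fintype ι]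
    (T : ι → ι → (Q.Dom →ₗ[ℂ] Q.Dom)) : Prop :=
  ∀ x : ι → Q.Dom, (∀ i, ((x i : Q.Dom) : H) ∈ Q.E l) →
    0 ≤ ∑ i, ∑ j, ⟪((x i : Q.Dom) : H), ((T i j (x j) : Q.Dom) : H)⟫_ℂ

/-- `‖T^{(n)}|_{H_l^n}‖ ≤ C` for a matrix of operators, with the ℓ²-norm on `H_l^n`. -/
def MatBddAt (Q : QuantizedDomain H Ω) (l : Ω) {ι : Type} [Fintype ι]
    (T : ι → ι → (Q.Dom →ₗ[ℂ] Q.Dom)) (C : ℝ) : Prop :=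
  ∀ x : ι → Q.Dom, (∀ i, ((x i : Q.Dom) : H) ∈ Q.E l) →
    ∑ i, ‖(((∑ j, T i j (x j) : Q.Dom)) : H)‖ ^ 2 ≤ C ^ 2 * ∑ i, ‖((x i : Q.Dom) : H)‖ ^ 2

end QuantizedDomain

/-- A (unital, local contractive) `*`-representation of a locally C*-algebra on a
quantized domain. -/
def IsRepn {Λ : Type} [Preorder Λ] {A : Type} [Ring A] [StarRing A] [Algebra ℂ A]
    {H' : Type} [NormedAddCommGroup H'] [InnerProductSpace ℂ H'] {Ω' : Type} [Preorder Ω']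
    (P : LocalCstarSeminorms Λ A) (Q' : QuantizedDomain H' Ω')
    (π : A → (Q'.Dom →ₗ[ℂ] Q'.Dom)) : Prop :=
  (∀ a, Q'.MemCED (π a)) ∧
  π 1 = LinearMap.id ∧
  (∀ a b, π (a + b) = π a + π b) ∧
  (∀ (c : ℂ) (a : A), π (c • a) = c • π a) ∧
  (∀ a b, π (a * b) = (π a).comp (π b)) ∧
  (∀ a, Q'.IsAdjoint (π a) (π (star a))) ∧
  (∀ l, ∃ α, ∀ a, Q'.BddAt l (π a) (P.p α a))

/-- Irreducibility of a representation: the commutant of `π(A)` inside `C*_{E'}(D')`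
is trivial. -/
def IsIrreducibleRepn {H' : Type} [NormedAddCommGroup H'] [InnerProductSpace ℂ H']
    {Ω' : Type} [Preorder Ω'] {A : Type}
    (Q' : QuantizedDomain H' Ω') (π : A → (Q'.Dom →ₗ[ℂ] Q'.Dom)) : Prop :=
  ∀ T : H' →L[ℂ] H',
    (∀ l, ∀ v : H', v ∈ Q'.E l → T v ∈ Q'.E l) →
    (∀ l, ∀ x : Q'.Dom, (x : H') ∈ (Q'.E l)ᗮ → T (x : H') ∈ (Q'.E l)ᗮ) →
    (∀ (a : A) (x y : Q'.Dom), (y : H') = T (x : H') →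
      T ((π a x : Q'.Dom) : H') = ((π a y : Q'.Dom) : H')) →
    ∃ c : ℂ, T = c • (1 : H' →L[ℂ] H')

section Maps

variable {Λ : Type} [Preorder Λ] {A : Type} [Ring A] [StarRing A] [Algebra ℂ A]
  {H : Type} [NormedAddCommGroup H] [InnerProductSpace ℂ H] {Ω : Type} [Preorder Ω]

/-- Local complete positivity for a map defined on a subspace `S` of a locally
C*-algebra. -/
def IsLocalCPOn (P : LocalCstarSeminorms Λ A) (S : Submodule ℂ A)
    (Q : QuantizedDomain H Ω) (φ : S →ₗ[ℂ] (Q.Dom →ₗ[ℂ] Q.Dom)) : Prop :=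
  ∀ l, ∃ α, ∀ (n : ℕ) (M : Fin n → Fin n → S),
    P.MatPos α (Matrix.of fun i j => (M i j : A)) →
    Q.MatPosAt l (fun i j => φ (M i j))

/-- Local complete contractivity for a map defined on a subspace `S` of a locally
C*-algebra. -/
def IsLocalCCOn (P : LocalCstarSeminorms Λ A) (S : Submodule ℂ A)
    (Q : QuantizedDomain H Ω) (φ : S →ₗ[ℂ] (Q.Dom →ₗ[ℂ] Q.Dom)) : Prop :=
  ∀ l, ∃ α, ∀ (n : ℕ) (M : Fin n → Fin n → S) (C : ℝ), 0 ≤ C →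
    P.MatBddBy α (Matrix.of fun i j => (M i j : A)) C →
    Q.MatBddAt l (fun i j => φ (M i j)) C

/-- The class `CPCC(S, C*_E(D))`. -/
def IsCPCCOn (P : LocalCstarSeminorms Λ A) (S : Submodule ℂ A)
    (Q : QuantizedDomain H Ω) (φ : S →ₗ[ℂ] (Q.Dom →ₗ[ℂ] Q.Dom)) : Prop :=
  (∀ s, Q.MemCED (φ s)) ∧ IsLocalCPOn P S Q φ ∧ IsLocalCCOn P S Q φ

/-- Purity of a map in `CPCC(S, C*_E(D))`. -/
def IsPureOn (P : LocalCstarSeminorms Λ A) (S : Submodule ℂ A)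
    (Q : QuantizedDomain H Ω) (φ : S →ₗ[ℂ] (Q.Dom →ₗ[ℂ] Q.Dom)) : Prop :=
  ∀ ψ : S →ₗ[ℂ] (Q.Dom →ₗ[ℂ] Q.Dom), IsCPCCOn P S Q ψ → IsCPCCOn P S Q (φ - ψ) →
    ∃ t : ℝ, 0 ≤ t ∧ t ≤ 1 ∧ ψ = (t : ℂ) • φ

/-- Local complete positivity for a globally defined map. -/
def IsLocalCP (P : LocalCstarSeminorms Λ A)
    (Q : QuantizedDomain H Ω) (φ : A →ₗ[ℂ] (Q.Dom →ₗ[ℂ] Q.Dom)) : Prop :=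
  ∀ l, ∃ α, ∀ (n : ℕ) (M : Matrix (Fin n) (Fin n) A),
    P.MatPos α M → Q.MatPosAt l (fun i j => φ (M i j))

/-- Local complete contractivity for a globally defined map. -/
def IsLocalCC (P : LocalCstarSeminorms Λ A)
    (Q : QuantizedDomain H Ω) (φ : A →ₗ[ℂ] (Q.Dom →ₗ[ℂ] Q.Dom)) : Prop :=
  ∀ l, ∃ α, ∀ (n : ℕ) (M : Matrix (Fin n) (Fin n) A) (C : ℝ), 0 ≤ C →
    P.MatBddBy α M C → Q.MatBddAt l (fun i j => φ (M i j)) C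

/-- The class `CPCC(A, C*_E(D))`. -/
def IsCPCC (P : LocalCstarSeminorms Λ A)
    (Q : QuantizedDomain H Ω) (φ : A →ₗ[ℂ] (Q.Dom →ₗ[ℂ] Q.Dom)) : Prop :=
  (∀ a, Q.MemCED (φ a)) ∧ IsLocalCP P Q φ ∧ IsLocalCC P Q φ

/-- Purity of a map in `CPCC(A, C*_E(D))`. -/
def IsPure (P : LocalCstarSeminorms Λ A)
    (Q : QuantizedDomain H Ω) (φ : A →ₗ[ℂ] (Q.Dom →ₗ[ℂ] Q.Dom)) : Prop :=
  ∀ ψ : A →ₗ[ℂ] (Q.Dom →ₗ[ℂ] Q.Dom), IsCPCC P Q ψ → IsCPCC P Q (φ - ψ) →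
    ∃ t : ℝ, 0 ≤ t ∧ t ≤ 1 ∧ ψ = (t : ℂ) • φ

end Maps

section OpMaps

variable {H1 : Type} [NormedAddCommGroup H1] [InnerProductSpace ℂ H1] {Ω1 : Type} [Preorder Ω1]
  {H2 : Type} [NormedAddCommGroup H2] [InnerProductSpace ℂ H2] {Ω2 : Type} [Preorder Ω2]

/-- Local complete positivity for a map defined on a subspace of `C*_{E_1}(D_1)`. -/
def IsLocalCPOp (Q1 : QuantizedDomain H1 Ω1) (Q2 : QuantizedDomain H2 Ω2)
    (S : Submodule ℂ (Q1.Dom →ₗ[ℂ] Q1.Dom))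
    (φ : S →ₗ[ℂ] (Q2.Dom →ₗ[ℂ] Q2.Dom)) : Prop :=
  ∀ l, ∃ α, ∀ (n : ℕ) (M : Fin n → Fin n → S),
    Q1.MatPosAt α (fun i j => (M i j : Q1.Dom →ₗ[ℂ] Q1.Dom)) →
    Q2.MatPosAt l (fun i j => φ (M i j))

/-- Local complete contractivity for a map defined on a subspace of `C*_{E_1}(D_1)`. -/
def IsLocalCCOp (Q1 : QuantizedDomain H1 Ω1) (Q2 : QuantizedDomain H2 Ω2)
    (S : Submodule ℂ (Q1.Dom →ₗ[ℂ] Q1.Dom))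
    (φ : S →ₗ[ℂ] (Q2.Dom →ₗ[ℂ] Q2.Dom)) : Prop :=
  ∀ l, ∃ α, ∀ (n : ℕ) (M : Fin n → Fin n → S) (C : ℝ), 0 ≤ C →
    Q1.MatBddAt α (fun i j => (M i j : Q1.Dom →ₗ[ℂ] Q1.Dom)) C →
    Q2.MatBddAt l (fun i j => φ (M i j)) C

end OpMaps

end LocallyCstarPrelude

/-- An element `a` of a locally C*-algebra is `α`-positive iff its image in the
quotient C*-algebra `A_α` is positive. -/
theorem stmt1_alphaPositive_iff_quotient_positive
    {Λ A : Type} [Preorder Λ] [Ring A] [StarRing A] [Algebra ℂ A]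
    (P : LocalCstarSeminorms Λ A) (α : Λ)
    {B : Type} [NormedRing B] [StarRing B] [CStarRing B] [CompleteSpace B]
    [NormedAlgebra ℂ B] [StarModule ℂ B] [PartialOrder B] [StarOrderedRing B]
    (πα : A →⋆ₐ[ℂ] B) (hsurj : Function.Surjective πα)
    (hnorm : ∀ a : A, ‖πα a‖ = P.p α a) (a : A) :
    P.Pos α a ↔ 0 ≤ πα a := by
  letI : CStarAlgebra B := ⟨⟩
  constructor
  · rintro ⟨b, x, rfl, hx⟩
    have hx0 : πα x = 0 := by
      rw [← norm_eq_zero, hnorm, hx]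
    rw [map_add, map_mul, map_star, hx0, add_zero]
    exact star_mul_self_nonneg _
  · intro ha
    obtain ⟨c, hc⟩ := hsurj (CFC.sqrt (πα a))
    refine ⟨c, a - star c * c, by abel, ?_⟩
    rw [← hnorm, norm_eq_zero, map_sub, map_mul, map_star, hc, sub_eq_zero]
    have hsa : star (CFC.sqrt (πα a)) = CFC.sqrt (πα a) :=
      (CFC.sqrt_nonneg (a := πα a)).isSelfAdjoint.star_eq
    rw [hsa, CFC.sqrt_mul_sqrt_self (πα a) ha]
end

section
/- Let S₁ ⊆ S₂ be local operator systems in a locally C*-algebra A, and let φ : S₂ → C*_E(D) be a unital local CP map which is a linear extreme point of CPCC(S₂, C*_E(D)). If the restriction φ|_{S₁} is pure, then φ is pure. -/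
open scoped ComplexOrder InnerProductSpace

section AuxLemmas

variable {Λ A : Type} [Preorder Λ] [Ring A] [StarRing A] [Algebra ℂ A]
  {H Ω : Type} [NormedAddCommGroup H] [InnerProductSpace ℂ H] [Preorder Ω]

lemma matPos_mono (P : LocalCstarSeminorms Λ A) {α γ : Λ} (h : α ≤ γ) {ι : Type} [Fintype ι]
    {M : Matrix ι ι A} (hM : P.MatPos γ M) : P.MatPos α M := by
  obtain ⟨B, X, h1, h2⟩ := hM
  refine ⟨B, X, h1, fun i j => le_antisymm ?_ (P.nonneg _ _)⟩
  simpa [h2 i j] using P.mono h (X i j)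

lemma memCED_add (Q : QuantizedDomain H Ω) {T T' : Q.Dom →ₗ[ℂ] Q.Dom}
    (h : Q.MemCED T) (h' : Q.MemCED T') : Q.MemCED (T + T') := by
  obtain ⟨h1, h2, h3⟩ := h
  obtain ⟨h1', h2', h3'⟩ := h'
  refine ⟨fun l x hx => ?_, fun l => ?_, fun l x hx => ?_⟩
  · simpa using (Q.E l).add_mem (h1 l x hx) (h1' l x hx)
  · obtain ⟨C, hC, hb⟩ := h2 l
    obtain ⟨C', hC', hb'⟩ := h2' l
    refine ⟨C + C', by positivity, fun x hx => ?_⟩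
    calc ‖(((T + T') x : Q.Dom) : H)‖ = ‖((T x : Q.Dom) : H) + ((T' x : Q.Dom) : H)‖ := by
          simp
      _ ≤ ‖((T x : Q.Dom) : H)‖ + ‖((T' x : Q.Dom) : H)‖ := norm_add_le _ _
      _ ≤ C * ‖(x : H)‖ + C' * ‖(x : H)‖ := add_le_add (hb x hx) (hb' x hx)
      _ = (C + C') * ‖(x : H)‖ := by ring
  · simpa using ((Q.E l)ᗮ).add_mem (h3 l x hx) (h3' l x hx)

lemma memCED_smul (Q : QuantizedDomain H Ω) {T : Q.Dom →ₗ[ℂ] Q.Dom} (c : ℂ)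
    (h : Q.MemCED T) : Q.MemCED (c • T) := by
  obtain ⟨h1, h2, h3⟩ := h
  refine ⟨fun l x hx => ?_, fun l => ?_, fun l x hx => ?_⟩
  · simpa using (Q.E l).smul_mem c (h1 l x hx)
  · obtain ⟨C, hC, hb⟩ := h2 l
    refine ⟨‖c‖ * C, by positivity, fun x hx => ?_⟩
    calc ‖(((c • T) x : Q.Dom) : H)‖ = ‖c‖ * ‖((T x : Q.Dom) : H)‖ := by
          simp [norm_smul]
      _ ≤ ‖c‖ * (C * ‖(x : H)‖) := by
          exact mul_le_mul_of_nonneg_left (hb x hx) (norm_nonneg c)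
      _ = ‖c‖ * C * ‖(x : H)‖ := by ring
  · simpa using ((Q.E l)ᗮ).smul_mem c (h3 l x hx)

lemma localCP_add (P : LocalCstarSeminorms Λ A) (Q : QuantizedDomain H Ω)
    {S : Submodule ℂ A} {φ ψ : S →ₗ[ℂ] (Q.Dom →ₗ[ℂ] Q.Dom)}
    (hφ : IsLocalCPOn P S Q φ) (hψ : IsLocalCPOn P S Q ψ) :
    IsLocalCPOn P S Q (φ + ψ) := by
  intro l
  obtain ⟨α₁, h1⟩ := hφ l
  obtain ⟨α₂, h2⟩ := hψ l
  obtain ⟨γ, hγ1, hγ2⟩ := P.directed α₁ α₂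
  refine ⟨γ, fun n M hM => ?_⟩
  intro x hx
  have p1 := h1 n M (matPos_mono P hγ1 hM) x hx
  have p2 := h2 n M (matPos_mono P hγ2 hM) x hx
  have := add_nonneg p1 p2
  simpa [LinearMap.add_apply, inner_add_right, Finset.sum_add_distrib] using this

lemma localCP_smul (P : LocalCstarSeminorms Λ A) (Q : QuantizedDomain H Ω)
    {S : Submodule ℂ A} {φ : S →ₗ[ℂ] (Q.Dom →ₗ[ℂ] Q.Dom)} {c : ℝ} (hc : 0 ≤ c)
    (hφ : IsLocalCPOn P S Q φ) : IsLocalCPOn P S Q ((c : ℂ) • φ) := by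
  intro l
  obtain ⟨α, h1⟩ := hφ l
  refine ⟨α, fun n M hM => ?_⟩
  intro x hx
  have p1 := h1 n M hM x hx
  have hc' : (0 : ℂ) ≤ (c : ℂ) := Complex.zero_le_real.mpr hc
  simp only [LinearMap.smul_apply, Submodule.coe_smul, inner_smul_right, ← Finset.mul_sum]
  exact mul_nonneg hc' p1

end AuxLemmas
section AuxLemmas2

variable {Λ A : Type} [Preorder Λ] [Ring A] [StarRing A] [Algebra ℂ A]
  {H Ω : Type} [NormedAddCommGroup H] [InnerProductSpace ℂ H] [Preorder Ω]

lemma cpcc_restrict (P : LocalCstarSeminorms Λ A) (Q : QuantizedDomain H Ω)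
    {S₁ S₂ : Submodule ℂ A} (hsub : S₁ ≤ S₂)
    {ψ : S₂ →ₗ[ℂ] (Q.Dom →ₗ[ℂ] Q.Dom)} (h : IsCPCCOn P S₂ Q ψ) :
    IsCPCCOn P S₁ Q (ψ.comp (Submodule.inclusion hsub)) := by
  obtain ⟨h1, h2, h3⟩ := h
  refine ⟨fun s => h1 _, ?_, ?_⟩
  · intro l
    obtain ⟨α, hα⟩ := h2 l
    refine ⟨α, fun n M hM => ?_⟩
    exact hα n (fun i j => Submodule.inclusion hsub (M i j)) hM
  · intro l
    obtain ⟨α, hα⟩ := h3 l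
    refine ⟨α, fun n M C hC hM => ?_⟩
    exact hα n (fun i j => Submodule.inclusion hsub (M i j)) C hC hM

/-- The `2n × 2n` block matrix `[[C·1, M], [M*, C·1]]` with entries in `S`. -/
def blockS {S : Submodule ℂ A} (hone : (1 : A) ∈ S) (hstar : ∀ s ∈ S, star s ∈ S)
    {n : ℕ} (M : Fin n → Fin n → S) (C : ℝ) :
    Fin n ⊕ Fin n → Fin n ⊕ Fin n → S
  | .inl i, .inl j => (C : ℂ) • (if i = j then (⟨1, hone⟩ : S) else 0)
  | .inl i, .inr j => M i j
  | .inr i, .inl j => ⟨star ((M j i : A)), hstar _ (M j i).2⟩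
  | .inr i, .inr j => (C : ℂ) • (if i = j then (⟨1, hone⟩ : S) else 0)

lemma blockS_coe {S : Submodule ℂ A} (hone : (1 : A) ∈ S) (hstar : ∀ s ∈ S, star s ∈ S)
    {n : ℕ} (M : Fin n → Fin n → S) (C : ℝ) (p q : Fin n ⊕ Fin n) :
    ((blockS hone hstar M C p q : A)) =
      Matrix.fromBlocks ((C : ℂ) • (1 : Matrix (Fin n) (Fin n) A))
        (Matrix.of fun i j => (M i j : A))
        (Matrix.of fun i j => (M i j : A)).conjTranspose
        ((C : ℂ) • (1 : Matrix (Fin n) (Fin n) A)) p q := by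
  rcases p with i | i <;> rcases q with j | j <;>
    simp [blockS, Matrix.fromBlocks, Matrix.one_apply, Matrix.conjTranspose_apply,
      apply_ite (fun s : S => (s : A))]

end AuxLemmas2
section AuxLemmas3

variable {Λ A : Type} [Preorder Λ] [Ring A] [StarRing A] [Algebra ℂ A]
  {H Ω : Type} [NormedAddCommGroup H] [InnerProductSpace ℂ H] [Preorder Ω]

/-- A unital local CP map into `C*_E(D)` is automatically locally completely
contractive. -/
lemma unitalCP_CC (P : LocalCstarSeminorms Λ A) (Q : QuantizedDomain H Ω)
    {S : Submodule ℂ A} (hone : (1 : A) ∈ S) (hstar : ∀ s ∈ S, star s ∈ S)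
    (χ : S →ₗ[ℂ] (Q.Dom →ₗ[ℂ] Q.Dom))
    (hmem : ∀ s, Q.MemCED (χ s))
    (hu : χ ⟨1, hone⟩ = LinearMap.id)
    (hCP : IsLocalCPOn P S Q χ) : IsLocalCCOn P S Q χ := by
  intro l
  obtain ⟨α, hα⟩ := hCP l
  refine ⟨α, fun n M C hC hBdd => ?_⟩
  intro x hx
  show ∑ i, ‖(((∑ j, χ (M i j) (x j) : Q.Dom)) : H)‖ ^ 2 ≤
      C ^ 2 * ∑ i, ‖((x i : Q.Dom) : H)‖ ^ 2
  set y : Fin n → Q.Dom := fun i => ∑ j, χ (M i j) (x j) with hydef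
  have hsum_eq : ∀ p, ∑ q, (((χ (M p q)) (x q) : Q.Dom) : H) = ((y p : Q.Dom) : H) := by
    intro p
    rw [hydef]
    simp
  have hy : ∀ i, ((y i : Q.Dom) : H) ∈ Q.E l := by
    intro i
    rw [← hsum_eq i]
    exact Submodule.sum_mem _ (fun j _ => (hmem (M i j)).1 l (x j) (hx j))
  set e : (Fin n ⊕ Fin n) ≃ Fin (n + n) := finSumFinEquiv with he
  have hMatPos : P.MatPos α
      (Matrix.of fun i j => ((blockS hone hstar M C (e.symm i) (e.symm j) : A))) := by
    obtain ⟨B, X, hBX, hX⟩ := hBdd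
    refine ⟨Matrix.of fun i j => B (e.symm i) (e.symm j),
            Matrix.of fun i j => X (e.symm i) (e.symm j), ?_, fun i j => hX _ _⟩
    ext i j
    have hent := fun p q => congrFun (congrFun hBX p) q
    rw [Matrix.of_apply, blockS_coe, hent]
    simp only [Matrix.add_apply, Matrix.mul_apply, Matrix.conjTranspose_apply, Matrix.of_apply]
    congr 1
    exact (Equiv.sum_comp e.symm fun c => star (B c (e.symm i)) * B c (e.symm j)).symm
  have hpos := hα (n + n) (fun i j => blockS hone hstar M C (e.symm i) (e.symm j)) hMatPos
  have hdiag : ∀ (i j : Fin n) (v : Q.Dom),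
      χ ((C : ℂ) • (if i = j then (⟨1, hone⟩ : S) else 0)) v
        = if i = j then (C : ℂ) • v else 0 := by
    intro i j v
    by_cases h : i = j
    · simp only [h, if_true, map_smul, hu, LinearMap.smul_apply, LinearMap.id_apply]
    · simp [h]
  set a : ℂ := ∑ i, ⟪((y i : Q.Dom) : H), ((y i : Q.Dom) : H)⟫_ℂ with hadef
  set b : ℂ := ∑ i, ∑ j, ⟪((x i : Q.Dom) : H),
      ((χ ⟨star ((M j i : A)), hstar _ (M j i).2⟩ (y j) : Q.Dom) : H)⟫_ℂ with hbdef
  set bB : ℂ := ∑ i, ⟪((x i : Q.Dom) : H), ((x i : Q.Dom) : H)⟫_ℂ with hbBdef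
  have key : ∀ lam : ℂ, 0 ≤ (C : ℂ) * a + lam * a + (starRingEnd ℂ lam) * b
      + (starRingEnd ℂ lam * lam) * ((C : ℂ) * bB) := by
    intro lam
    have hz : ∀ k : Fin (n + n),
        ((Sum.elim y (fun i => lam • x i) (e.symm k) : Q.Dom) : H) ∈ Q.E l := by
      intro k
      rcases hk : e.symm k with i | i
      · simpa [hk] using hy i
      · simp only [hk, Sum.elim_inr]
        exact (Q.E l).smul_mem lam (hx i)
    have h0 := hpos (fun k => Sum.elim y (fun i => lam • x i) (e.symm k)) hz
    have hre : ∀ (F : Fin (n + n) → Fin (n + n) → ℂ),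
        ∑ i, ∑ j, F i j = ∑ p, ∑ q, F (e p) (e q) := by
      intro F
      rw [← Equiv.sum_comp e (fun i => ∑ j, F i j)]
      exact Finset.sum_congr rfl fun p _ => (Equiv.sum_comp e (F (e p))).symm
    refine le_of_le_of_eq h0 ((hre _).trans ?_)
    simp only [Equiv.symm_apply_apply, Fintype.sum_sum_type, Sum.elim_inl, Sum.elim_inr,
      Finset.sum_add_distrib]
    have e11 : ∑ p : Fin n, ∑ q : Fin n, ⟪((y p : Q.Dom) : H),
        ((χ (blockS hone hstar M C (.inl p) (.inl q)) (y q) : Q.Dom) : H)⟫_ℂ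
          = (C : ℂ) * a := by
      have hterm : ∀ p q : Fin n, ⟪((y p : Q.Dom) : H),
          ((χ (blockS hone hstar M C (.inl p) (.inl q)) (y q) : Q.Dom) : H)⟫_ℂ
            = if p = q then (C : ℂ) * ⟪((y p : Q.Dom) : H), ((y q : Q.Dom) : H)⟫_ℂ else 0 := by
        intro p q
        rw [show blockS hone hstar M C (.inl p) (.inl q)
            = (C : ℂ) • (if p = q then (⟨1, hone⟩ : S) else 0) from rfl, hdiag]
        by_cases h : p = q
        · simp only [h, if_true, Submodule.coe_smul, inner_smul_right]
        · simp [h]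
      simp only [hterm, Finset.sum_ite_eq, Finset.mem_univ, if_true]
      rw [hadef, Finset.mul_sum]
    have e12 : ∑ p : Fin n, ∑ q : Fin n, ⟪((y p : Q.Dom) : H),
        ((χ (blockS hone hstar M C (.inl p) (.inr q)) (lam • x q) : Q.Dom) : H)⟫_ℂ
          = lam * a := by
      have hterm : ∀ p q : Fin n, ⟪((y p : Q.Dom) : H),
          ((χ (blockS hone hstar M C (.inl p) (.inr q)) (lam • x q) : Q.Dom) : H)⟫_ℂ
            = lam * ⟪((y p : Q.Dom) : H), ((χ (M p q) (x q) : Q.Dom) : H)⟫_ℂ := by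
        intro p q
        rw [show blockS hone hstar M C (.inl p) (.inr q) = M p q from rfl,
          map_smul, Submodule.coe_smul, inner_smul_right]
      simp only [hterm, ← Finset.mul_sum]
      congr 1
      rw [hadef]
      refine Finset.sum_congr rfl fun p _ => ?_
      rw [← hsum_eq p]
      exact (inner_sum _ _ _).symm
    have e21 : ∑ p : Fin n, ∑ q : Fin n, ⟪(((lam • x p : Q.Dom)) : H),
        ((χ (blockS hone hstar M C (.inr p) (.inl q)) (y q) : Q.Dom) : H)⟫_ℂ
          = (starRingEnd ℂ lam) * b := by
      rw [hbdef, Finset.mul_sum]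
      refine Finset.sum_congr rfl fun p _ => ?_
      rw [Finset.mul_sum]
      refine Finset.sum_congr rfl fun q _ => ?_
      rw [Submodule.coe_smul, inner_smul_left]
      rfl
    have e22 : ∑ p : Fin n, ∑ q : Fin n, ⟪(((lam • x p : Q.Dom)) : H),
        ((χ (blockS hone hstar M C (.inr p) (.inr q)) (lam • x q) : Q.Dom) : H)⟫_ℂ
          = (starRingEnd ℂ lam * lam) * ((C : ℂ) * bB) := by
      have hterm : ∀ p q : Fin n, ⟪(((lam • x p : Q.Dom)) : H),
          ((χ (blockS hone hstar M C (.inr p) (.inr q)) (lam • x q) : Q.Dom) : H)⟫_ℂ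
            = if p = q then (starRingEnd ℂ lam * lam)
                * ((C : ℂ) * ⟪((x p : Q.Dom) : H), ((x q : Q.Dom) : H)⟫_ℂ) else 0 := by
        intro p q
        rw [show blockS hone hstar M C (.inr p) (.inr q)
            = (C : ℂ) • (if p = q then (⟨1, hone⟩ : S) else 0) from rfl, hdiag]
        by_cases h : p = q
        · simp only [h, if_true, Submodule.coe_smul, inner_smul_left, inner_smul_right]
          ring
        · simp [h]
      simp only [hterm, Finset.sum_ite_eq, Finset.mem_univ, if_true]
      rw [hbBdef, Finset.mul_sum, Finset.mul_sum]
    rw [e11, e12, e21, e22]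
    ring
  -- extract the real quadratic inequality
  set Ar : ℝ := ∑ i, ‖((y i : Q.Dom) : H)‖ ^ 2 with hArdef
  set Br : ℝ := ∑ i, ‖((x i : Q.Dom) : H)‖ ^ 2 with hBrdef
  have hA : a = ((Ar : ℝ) : ℂ) := by
    rw [hadef, hArdef]
    push_cast
    exact Finset.sum_congr rfl fun i _ => inner_self_eq_norm_sq_to_K _
  have hB : bB = ((Br : ℝ) : ℂ) := by
    rw [hbBdef, hBrdef]
    push_cast
    exact Finset.sum_congr rfl fun i _ => inner_self_eq_norm_sq_to_K _
  rw [hA, hB] at key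
  have hAr0 : 0 ≤ Ar := Finset.sum_nonneg fun i _ => sq_nonneg _
  have hBr0 : 0 ≤ Br := Finset.sum_nonneg fun i _ => sq_nonneg _
  have hb_im : b.im = 0 := by
    have h := key 1
    rw [Complex.le_def] at h
    have h2 := h.2
    simp [Complex.add_im, Complex.mul_im, Complex.ofReal_re, Complex.ofReal_im] at h2
    linarith
  have hb_re : b.re = Ar := by
    have h := key Complex.I
    rw [Complex.le_def] at h
    have h2 := h.2
    simp [Complex.add_im, Complex.mul_im, Complex.mul_re, Complex.I_re, Complex.I_im,
      Complex.ofReal_re, Complex.ofReal_im, Complex.conj_I] at h2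
    linarith
  have hb : b = ((Ar : ℝ) : ℂ) := by
    apply Complex.ext
    · rw [hb_re]; simp
    · rw [hb_im]; simp
  have hquad : ∀ s : ℝ, 0 ≤ C * Ar - 2 * s * Ar + s ^ 2 * (C * Br) := by
    intro s
    have h := key (-(s : ℂ))
    rw [hb] at h
    have heq : (C : ℂ) * ((Ar : ℝ) : ℂ) + (-(s : ℂ)) * ((Ar : ℝ) : ℂ)
        + (starRingEnd ℂ (-(s : ℂ))) * ((Ar : ℝ) : ℂ)
        + (starRingEnd ℂ (-(s : ℂ)) * (-(s : ℂ))) * ((C : ℂ) * ((Br : ℝ) : ℂ))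
        = ((C * Ar - 2 * s * Ar + s ^ 2 * (C * Br) : ℝ) : ℂ) := by
      rw [map_neg, Complex.conj_ofReal]
      push_cast
      ring
    rw [heq] at h
    exact Complex.zero_le_real.mp h
  rcases eq_or_lt_of_le hC with hC0 | hC0
  · have h := hquad 1
    rw [← hC0] at h ⊢
    nlinarith [hAr0, hBr0]
  · have h := hquad C
    nlinarith [hAr0, hBr0, hC0]

end AuxLemmas3
/-- If a unital local CP map on `S₂` is a linear extreme point of `CPCC(S₂, C*_E(D))`
and its restriction to `S₁ ⊆ S₂` is pure, then it is pure. -/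
theorem stmt13_extreme_and_restriction_pure_implies_pure
    {Λ A : Type} [Preorder Λ] [Ring A] [StarRing A] [Algebra ℂ A]
    (P : LocalCstarSeminorms Λ A)
    (S₁ S₂ : Submodule ℂ A) (hsub : S₁ ≤ S₂)
    (hone₁ : (1 : A) ∈ S₁) (hstar₁ : ∀ s ∈ S₁, star s ∈ S₁)
    (hone₂ : (1 : A) ∈ S₂) (hstar₂ : ∀ s ∈ S₂, star s ∈ S₂)
    {H Ω : Type} [NormedAddCommGroup H] [InnerProductSpace ℂ H] [Preorder Ω]
    (Q : QuantizedDomain H Ω)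
    (φ : S₂ →ₗ[ℂ] (Q.Dom →ₗ[ℂ] Q.Dom))
    (hmem : ∀ s : S₂, Q.MemCED (φ s))
    (hunital : φ ⟨1, hone₂⟩ = LinearMap.id)
    (hCP : IsLocalCPOn P S₂ Q φ)
    (hextreme : ∀ (ψ₁ ψ₂ : S₂ →ₗ[ℂ] (Q.Dom →ₗ[ℂ] Q.Dom)),
      IsCPCCOn P S₂ Q ψ₁ → IsCPCCOn P S₂ Q ψ₂ → ∀ t : ℝ, 0 < t → t < 1 →
        φ = (t : ℂ) • ψ₁ + ((1 - t : ℝ) : ℂ) • ψ₂ → ψ₁ = φ ∧ ψ₂ = φ)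
    (hpure₁ : IsPureOn P S₁ Q (φ.comp (Submodule.inclusion hsub))) :
    IsPureOn P S₂ Q φ := by

  intro ψ hψ hφψ
  have hψ₁ : IsCPCCOn P S₁ Q (ψ.comp (Submodule.inclusion hsub)) :=
    cpcc_restrict P Q hsub hψ
  have hφψ₁ : IsCPCCOn P S₁ Q
      ((φ.comp (Submodule.inclusion hsub)) - (ψ.comp (Submodule.inclusion hsub))) := by
    have h := cpcc_restrict P Q hsub hφψ
    rwa [LinearMap.sub_comp] at h
  obtain ⟨t, ht0, ht1, hres⟩ := hpure₁ _ hψ₁ hφψ₁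
  have hone_eq : Submodule.inclusion hsub (⟨1, hone₁⟩ : S₁) = (⟨1, hone₂⟩ : S₂) := rfl
  have hψ1 : ψ ⟨1, hone₂⟩ = (t : ℂ) • LinearMap.id := by
    have h := congrArg (fun f : S₁ →ₗ[ℂ] (Q.Dom →ₗ[ℂ] Q.Dom) => f ⟨1, hone₁⟩) hres
    simp only [LinearMap.comp_apply, LinearMap.smul_apply, hone_eq, hunital] at h
    exact h
  rcases eq_or_lt_of_le ht0 with h0 | h0
  · -- t = 0 : ψ vanishes at 1, use extremality with φ ∓ ψ
    have hψ10 : ψ ⟨1, hone₂⟩ = 0 := by rw [hψ1, ← h0]; simp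
    have hcpcc₂ : IsCPCCOn P S₂ Q (φ + ψ) := by
      refine ⟨fun s => memCED_add Q (hmem s) (hψ.1 s), localCP_add P Q hCP hψ.2.1, ?_⟩
      refine unitalCP_CC P Q hone₂ hstar₂ (φ + ψ)
        (fun s => memCED_add Q (hmem s) (hψ.1 s)) ?_ (localCP_add P Q hCP hψ.2.1)
      simp [hunital, hψ10]
    have hdec : φ = ((1/2 : ℝ) : ℂ) • (φ - ψ) + ((1 - (1/2 : ℝ) : ℝ) : ℂ) • (φ + ψ) := by
      norm_num
      module
    obtain ⟨-, h2⟩ := hextreme (φ - ψ) (φ + ψ) hφψ hcpcc₂ (1/2)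
      (by norm_num) (by norm_num) hdec
    have hψ0 : ψ = 0 := by
      have h3 : ψ = φ + ψ - φ := by abel
      rw [h3, h2]
      abel
    exact ⟨0, le_rfl, by norm_num, by simp [hψ0]⟩
  rcases eq_or_lt_of_le ht1 with h1 | h1
  · -- t = 1 : φ - ψ vanishes at 1
    have hψid : ψ ⟨1, hone₂⟩ = LinearMap.id := by rw [hψ1, h1]; simp
    have hmem' : ∀ s : S₂, Q.MemCED ((φ + (φ - ψ)) s) :=
      fun s => memCED_add Q (hmem s) (hφψ.1 s)
    have hcpcc₂ : IsCPCCOn P S₂ Q (φ + (φ - ψ)) := by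
      refine ⟨hmem', localCP_add P Q hCP hφψ.2.1, ?_⟩
      refine unitalCP_CC P Q hone₂ hstar₂ (φ + (φ - ψ)) hmem' ?_
        (localCP_add P Q hCP hφψ.2.1)
      simp [hunital, hψid]
    have hdec : φ = ((1/2 : ℝ) : ℂ) • ψ + ((1 - (1/2 : ℝ) : ℝ) : ℂ) • (φ + (φ - ψ)) := by
      norm_num
      module
    obtain ⟨hψφ, -⟩ := hextreme ψ (φ + (φ - ψ)) hψ hcpcc₂ (1/2)
      (by norm_num) (by norm_num) hdec
    exact ⟨1, by norm_num, le_rfl, by simp [hψφ]⟩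
  · -- 0 < t < 1
    have ht : (t : ℂ) ≠ 0 := by exact_mod_cast ne_of_gt h0
    have ht' : ((1 - t : ℝ) : ℂ) ≠ 0 := by
      have : (0:ℝ) < 1 - t := by linarith
      exact_mod_cast ne_of_gt this
    have hti : ((t⁻¹ : ℝ) : ℂ) * (t : ℂ) = 1 := by
      rw [← Complex.ofReal_mul, inv_mul_cancel₀ (ne_of_gt h0)]
      simp
    have hti' : (((1 - t)⁻¹ : ℝ) : ℂ) * ((1 - t : ℝ) : ℂ) = 1 := by
      rw [← Complex.ofReal_mul, inv_mul_cancel₀ (by linarith : (1 - t : ℝ) ≠ 0)]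
      simp
    set ψ₁ : S₂ →ₗ[ℂ] (Q.Dom →ₗ[ℂ] Q.Dom) := ((t⁻¹ : ℝ) : ℂ) • ψ with hψ₁def
    set ψ₂ : S₂ →ₗ[ℂ] (Q.Dom →ₗ[ℂ] Q.Dom) := (((1 - t)⁻¹ : ℝ) : ℂ) • (φ - ψ) with hψ₂def
    have hmem₁ : ∀ s : S₂, Q.MemCED (ψ₁ s) := fun s => memCED_smul Q _ (hψ.1 s)
    have hmem₂ : ∀ s : S₂, Q.MemCED (ψ₂ s) := fun s => memCED_smul Q _ (hφψ.1 s)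
    have hu₁ : ψ₁ ⟨1, hone₂⟩ = LinearMap.id := by
      rw [hψ₁def]
      simp only [LinearMap.smul_apply, hψ1, smul_smul, hti]
      simp
    have hu₂ : ψ₂ ⟨1, hone₂⟩ = LinearMap.id := by
      rw [hψ₂def]
      simp only [LinearMap.smul_apply, LinearMap.sub_apply, hψ1, hunital]
      rw [show LinearMap.id - (t : ℂ) • LinearMap.id
          = ((1 - t : ℝ) : ℂ) • (LinearMap.id : Q.Dom →ₗ[ℂ] Q.Dom) by
        push_cast; module]
      rw [smul_smul, hti']
      simp
    have hcp₁ : IsLocalCPOn P S₂ Q ψ₁ := localCP_smul P Q (by positivity) hψ.2.1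
    have hcp₂ : IsLocalCPOn P S₂ Q ψ₂ := by
      refine localCP_smul P Q ?_ hφψ.2.1
      have : (0:ℝ) < 1 - t := by linarith
      positivity
    have hcpcc₁ : IsCPCCOn P S₂ Q ψ₁ :=
      ⟨hmem₁, hcp₁, unitalCP_CC P Q hone₂ hstar₂ ψ₁ hmem₁ hu₁ hcp₁⟩
    have hcpcc₂ : IsCPCCOn P S₂ Q ψ₂ :=
      ⟨hmem₂, hcp₂, unitalCP_CC P Q hone₂ hstar₂ ψ₂ hmem₂ hu₂ hcp₂⟩
    have hdec : φ = (t : ℂ) • ψ₁ + ((1 - t : ℝ) : ℂ) • ψ₂ := by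
      rw [hψ₁def, hψ₂def, smul_smul, smul_smul, mul_comm ((t:ℂ)) _, hti,
        mul_comm (((1 - t : ℝ) : ℂ)) _, hti', one_smul, one_smul]
      abel
    obtain ⟨hψ₁φ, -⟩ := hextreme ψ₁ ψ₂ hcpcc₁ hcpcc₂ t h0 h1 hdec
    refine ⟨t, le_of_lt h0, le_of_lt h1, ?_⟩
    rw [hψ₁def] at hψ₁φ
    have hψeq : ψ = (t : ℂ) • (((t⁻¹ : ℝ) : ℂ) • ψ) := by
      rw [smul_smul, mul_comm, hti, one_smul]
    rw [hψeq, hψ₁φ]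
end

section
/- Let π : A → C*_E(D) be an irreducible representation of a locally C*-algebra A satisfying the local unique extension property for a generating subspace S, and let V be an isometry in B(H) with V(H_l) ⊆ H_l for all l such that π(x) ⊆ V*π(x)V for all x ∈ S. Then V is unitary; that is, every local boundary representation for S is a finite representation for S. -/
open scoped ComplexOrder InnerProductSpace

/-- Every local boundary representation for a generating subspace `S` is a finite
representation for `S`: any isometry `V` preserving each `H_l` with
`π(x) ⊆ V* π(x) V` for all `x ∈ S` is a unitary. -/
theorem stmt16_boundary_representation_is_finite
    {A : Type} [Ring A] [StarRing A] [Algebra ℂ A]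
    (P : LocalCstarSeminorms ℕ A)
    [TopologicalSpace A]
    (htop : ∀ (x : A) (s : Set A), s ∈ nhds x ↔
      ∃ (α : ℕ) (ε : ℝ), 0 < ε ∧ {y : A | P.p α (y - x) < ε} ⊆ s)
    (S : Submodule ℂ A) (hone : (1 : A) ∈ S) (hstar : ∀ s ∈ S, star s ∈ S)
    (hgen : closure ((Algebra.adjoin ℂ ((S : Set A) ∪ (star '' (S : Set A))) :
      Subalgebra ℂ A) : Set A) = Set.univ)
    {H : Type} [NormedAddCommGroup H] [InnerProductSpace ℂ H] [CompleteSpace H]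
    (Q : QuantizedDomain H ℕ)
    (π : A → (Q.Dom →ₗ[ℂ] Q.Dom))
    (hrepn : IsRepn P Q π)
    (hirr : IsIrreducibleRepn Q π)
    (huep : ∀ φ : A →ₗ[ℂ] (Q.Dom →ₗ[ℂ] Q.Dom),
      (∀ a : A, Q.MemCED (φ a)) → IsLocalCP P Q φ →
      (∀ s : S, φ (s : A) = π (s : A)) → ∀ a : A, φ a = π a)
    (V : H →L[ℂ] H) (hiso : ∀ v : H, ‖V v‖ = ‖v‖)
    (hVE : ∀ (l : ℕ) (v : H), v ∈ Q.E l → V v ∈ Q.E l)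
    (Vmap : Q.Dom →ₗ[ℂ] Q.Dom)
    (hVcompat : ∀ x : Q.Dom, ((Vmap x : Q.Dom) : H) = V (x : H))
    (hdilS : ∀ (s : S) (x : Q.Dom), ((π (s : A) x : Q.Dom) : H) =
      ContinuousLinearMap.adjoint V ((π (s : A) (Vmap x) : Q.Dom) : H)) :
    Function.Surjective V := by
  classical
  by_cases htriv : ∀ v : H, v = 0
  · intro w; exact ⟨0, by rw [map_zero]; exact (htriv w).symm⟩
  push_neg at htriv
  obtain ⟨v₀, hv₀⟩ := htriv
  obtain ⟨hced, hπone, hπadd, hπsmul, hπmul, hπadj, hπbdd⟩ := hrepn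
  -- Step 1: every E l is ⊥ or ⊤
  have hEl : ∀ l, Q.E l = ⊥ ∨ Q.E l = ⊤ := by
    intro l
    haveI : CompleteSpace (Q.E l) := (Q.isClosed l).completeSpace_coe
    set T : H →L[ℂ] H := (Q.E l).subtypeL.comp ((Q.E l).orthogonalProjectionOnto) with hT
    have hTv : ∀ v : H, T v = ((Q.E l).orthogonalProjectionOnto v : H) := fun v => rfl
    have hPself : ∀ {v : H}, v ∈ Q.E l → ((Q.E l).orthogonalProjectionOnto v : H) = v :=
      fun hv => Submodule.starProjection_eq_self_iff.mpr hv
    have hPinner : ∀ u w : H, ⟪((Q.E l).orthogonalProjectionOnto u : H), w⟫_ℂ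
        = ⟪u, ((Q.E l).orthogonalProjectionOnto w : H)⟫_ℂ :=
      fun u w => Submodule.inner_starProjection_left_eq_right (Q.E l) u w
    have hT1 : ∀ m, ∀ v : H, v ∈ Q.E m → T v ∈ Q.E m := by
      intro m v hv
      rcases le_total l m with h | h
      · rw [hTv]; exact Q.mono h (Submodule.coe_mem _)
      · rw [hTv, hPself (Q.mono h hv)]; exact hv
    have hT2 : ∀ m, ∀ x : Q.Dom, (x : H) ∈ (Q.E m)ᗮ → T (x : H) ∈ (Q.E m)ᗮ := by
      intro m x hx
      rcases le_total l m with h | h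
      · have hx' : (x : H) ∈ (Q.E l)ᗮ := Submodule.orthogonal_le (Q.mono h) hx
        rw [hTv, Submodule.orthogonalProjectionOnto_apply_of_mem_orthogonal hx']
        simp
      · rw [Submodule.mem_orthogonal]
        intro w hw
        rw [hTv, ← hPinner,
          hPself (Q.mono h hw)]
        exact (Submodule.mem_orthogonal _ _).mp hx w hw
    have hT3 : ∀ (a : A) (x y : Q.Dom), (y : H) = T (x : H) →
        T ((π a x : Q.Dom) : H) = ((π a y : Q.Dom) : H) := by
      intro a x y hyx
      have hy : (y : H) ∈ Q.E l := by rw [hyx, hTv]; exact Submodule.coe_mem _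
      have hxy : ((x - y : Q.Dom) : H) ∈ (Q.E l)ᗮ := by
        have hco : ((x - y : Q.Dom) : H) =
            (x : H) - ((Q.E l).orthogonalProjectionOnto (x : H) : H) := by
          rw [Submodule.coe_sub, hyx, hTv]
        rw [hco]
        exact Submodule.sub_starProjection_mem_orthogonal (K := Q.E l) _
      have h1 : ((π a y : Q.Dom) : H) ∈ Q.E l := (hced a).1 l y hy
      have h2 : ((π a (x - y) : Q.Dom) : H) ∈ (Q.E l)ᗮ := (hced a).2.2 l (x - y) hxy
      have hx_eq : x = y + (x - y) := by abel
      have hsplit : ((π a x : Q.Dom) : H)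
          = ((π a y : Q.Dom) : H) + ((π a (x - y) : Q.Dom) : H) := by
        conv_lhs => rw [hx_eq]
        rw [map_add, Submodule.coe_add]
      rw [hTv, hsplit, map_add, Submodule.coe_add,
        hPself h1,
        Submodule.orthogonalProjectionOnto_apply_of_mem_orthogonal h2]
      simp
    obtain ⟨c, hc⟩ := hirr T hT1 hT2 hT3
    have hidem : T (T v₀) = T v₀ := by
      rw [hTv v₀, hTv]
      exact hPself (Submodule.coe_mem _)
    have hcc : (c * c - c) • v₀ = 0 := by
      rw [hc] at hidem
      simp only [ContinuousLinearMap.smul_apply, ContinuousLinearMap.one_apply] at hidem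
      rw [sub_smul, mul_smul]
      rw [hidem]
      simp
    have hc01 : c = 0 ∨ c = 1 := by
      rcases smul_eq_zero.mp hcc with h | h
      · rcases mul_eq_zero.mp (show c * (c - 1) = 0 by linear_combination h) with h' | h'
        · exact Or.inl h'
        · exact Or.inr (by linear_combination h')
      · exact absurd h hv₀
    rcases hc01 with h | h
    · left
      rw [Submodule.eq_bot_iff]
      intro v hv
      have hTveq : T v = v := by rw [hTv]; exact hPself hv
      rw [hc, h] at hTveq
      simpa using hTveq.symm
    · right
      rw [Submodule.eq_top_iff']
      intro v
      have hTveq : T v = v := by rw [hc, h]; simp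
      rw [← hTveq, hTv]
      exact Submodule.coe_mem _
  -- Step 2: some E l₀ is ⊤
  have hl₀ : ∃ l₀, Q.E l₀ = ⊤ := by
    by_contra hnone
    push_neg at hnone
    have hbot : ∀ l, Q.E l = ⊥ := fun l => (hEl l).resolve_right (hnone l)
    have hun : (⋃ l, (Q.E l : Set H)) = {0} := by
      ext v
      simp [hbot]
    have hd := Q.dense v₀
    rw [hun, isClosed_singleton.closure_eq] at hd
    exact hv₀ hd
  obtain ⟨l₀, hl₀⟩ := hl₀
  have hDom : Q.Dom = ⊤ := by
    have hle : Q.E l₀ ≤ Q.Dom := le_iSup Q.E l₀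
    rw [hl₀] at hle
    exact top_unique hle
  have memDom : ∀ v : H, v ∈ Q.Dom := fun v => by rw [hDom]; exact Submodule.mem_top
  let toDom : H →ₗ[ℂ] Q.Dom := LinearMap.codRestrict Q.Dom LinearMap.id memDom
  -- auxiliary facts
  have hVnorm' : ∀ z : H, ‖(ContinuousLinearMap.adjoint V) z‖ ≤ ‖z‖ := by
    intro z
    calc ‖(ContinuousLinearMap.adjoint V) z‖ ≤ ‖ContinuousLinearMap.adjoint V‖ * ‖z‖ :=
          (ContinuousLinearMap.adjoint V).le_opNorm z
      _ ≤ 1 * ‖z‖ := by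
          apply mul_le_mul_of_nonneg_right _ (norm_nonneg z)
          rw [ContinuousLinearMap.adjoint.norm_map V]
          exact V.opNorm_le_bound zero_le_one fun v => by rw [hiso, one_mul]
      _ = ‖z‖ := one_mul _
  -- the compression map φ
  let φL : A →ₗ[ℂ] (Q.Dom →ₗ[ℂ] Q.Dom) :=
    { toFun := fun a => toDom ∘ₗ
        ((ContinuousLinearMap.adjoint V).toLinearMap ∘ₗ (Q.Dom.subtype ∘ₗ ((π a) ∘ₗ Vmap)))
      map_add' := by
        intro a b
        apply LinearMap.ext; intro x
        apply Subtype.ext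
        show (ContinuousLinearMap.adjoint V) ((π (a + b) (Vmap x) : Q.Dom) : H) =
          ((ContinuousLinearMap.adjoint V) ((π a (Vmap x) : Q.Dom) : H)) +
          ((ContinuousLinearMap.adjoint V) ((π b (Vmap x) : Q.Dom) : H))
        rw [hπadd]
        simp
      map_smul' := by
        intro c a
        apply LinearMap.ext; intro x
        apply Subtype.ext
        show (ContinuousLinearMap.adjoint V) ((π (c • a) (Vmap x) : Q.Dom) : H) =
          c • ((ContinuousLinearMap.adjoint V) ((π a (Vmap x) : Q.Dom) : H))
        rw [hπsmul]
        simp }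
  have hφval : ∀ (a : A) (x : Q.Dom),
      ((φL a x : Q.Dom) : H) = (ContinuousLinearMap.adjoint V) ((π a (Vmap x) : Q.Dom) : H) :=
    fun a x => rfl
  -- π is zero at 0 and additive over sums
  let πhom : A →+ (Q.Dom →ₗ[ℂ] Q.Dom) := AddMonoidHom.mk' π hπadd
  have hπhom : ∀ a, πhom a = π a := fun a => rfl
  have hinner_nonneg : ∀ v : H, (0 : ℂ) ≤ ⟪v, v⟫_ℂ := by
    intro v
    rw [Complex.nonneg_iff]
    exact ⟨@inner_self_nonneg ℂ H _ _ _ v, (inner_self_im (𝕜 := ℂ) v).symm⟩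
  -- π is locally completely positive
  have hπCP : ∀ l α, (∀ b, Q.BddAt l (π b) (P.p α b)) →
      ∀ (n : ℕ) (M : Matrix (Fin n) (Fin n) A), P.MatPos α M →
      Q.MatPosAt l (fun i j => π (M i j)) := by
    intro l α hα n M hM y hy
    obtain ⟨B, X, hMeq, hX⟩ := hM
    have hXz : ∀ i j, ((π (X i j) (y j) : Q.Dom) : H) = 0 := by
      intro i j
      have hb := hα (X i j) (y j) (hy j)
      rw [hX i j, zero_mul] at hb
      exact norm_le_zero_iff.mp hb
    have hstep : ∀ i j, ⟪((y i : Q.Dom) : H), ((π (M i j) (y j) : Q.Dom) : H)⟫_ℂ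
        = ∑ k, ⟪((π (B k i) (y i) : Q.Dom) : H), ((π (B k j) (y j) : Q.Dom) : H)⟫_ℂ := by
      intro i j
      have hM' : M i j = (∑ k, star (B k i) * B k j) + X i j := by
        rw [hMeq]
        simp [Matrix.add_apply, Matrix.mul_apply, Matrix.conjTranspose_apply]
      rw [hM', hπadd, LinearMap.add_apply, Submodule.coe_add, inner_add_right, hXz i j,
        inner_zero_right, add_zero]
      have hsum : π (∑ k, star (B k i) * B k j) = ∑ k, π (star (B k i) * B k j) := by
        rw [← hπhom, map_sum]
        rfl
      rw [hsum, LinearMap.sum_apply, Submodule.coe_sum, inner_sum]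
      apply Finset.sum_congr rfl
      intro k _
      rw [hπmul, LinearMap.comp_apply]
      exact (hπadj (B k i) (y i) (π (B k j) (y j))).symm
    calc (0 : ℂ) ≤ ∑ k, ⟪((∑ i, π (B k i) (y i) : Q.Dom) : H),
          ((∑ i, π (B k i) (y i) : Q.Dom) : H)⟫_ℂ :=
        Finset.sum_nonneg fun k _ => hinner_nonneg _
      _ = ∑ k, ∑ i, ∑ j, ⟪((π (B k i) (y i) : Q.Dom) : H),
          ((π (B k j) (y j) : Q.Dom) : H)⟫_ℂ := by
          apply Finset.sum_congr rfl
          intro k _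
          rw [Submodule.coe_sum, sum_inner]
          apply Finset.sum_congr rfl
          intro i _
          rw [inner_sum]
      _ = ∑ i, ∑ j, ∑ k, ⟪((π (B k i) (y i) : Q.Dom) : H),
          ((π (B k j) (y j) : Q.Dom) : H)⟫_ℂ := by
          rw [Finset.sum_comm]
          apply Finset.sum_congr rfl
          intro i _
          rw [Finset.sum_comm]
      _ = ∑ i, ∑ j, ⟪((y i : Q.Dom) : H), ((π (M i j) (y j) : Q.Dom) : H)⟫_ℂ := by
          apply Finset.sum_congr rfl
          intro i _
          apply Finset.sum_congr rfl
          intro j _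
          exact (hstep i j).symm
  -- MemCED for φL
  have hφced : ∀ a, Q.MemCED (φL a) := by
    intro a
    refine ⟨?_, ?_, ?_⟩
    · intro l x hx
      rcases hEl l with h | h
      · have hx0 : x = 0 := by
          apply Subtype.ext
          rw [h] at hx
          simpa using hx
        rw [hx0, map_zero]
        simpa using (Q.E l).zero_mem
      · rw [h]; exact Submodule.mem_top
    · intro l
      obtain ⟨α, hα⟩ := hπbdd l
      refine ⟨P.p α a, P.nonneg α a, ?_⟩
      intro x hx
      have hmem : ((Vmap x : Q.Dom) : H) ∈ Q.E l := by
        rw [hVcompat]; exact hVE l _ hx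
      calc ‖((φL a x : Q.Dom) : H)‖
          = ‖(ContinuousLinearMap.adjoint V) ((π a (Vmap x) : Q.Dom) : H)‖ := by rw [hφval]
        _ ≤ ‖((π a (Vmap x) : Q.Dom) : H)‖ := hVnorm' _
        _ ≤ P.p α a * ‖((Vmap x : Q.Dom) : H)‖ := hα a (Vmap x) hmem
        _ = P.p α a * ‖(x : H)‖ := by rw [hVcompat, hiso]
    · intro l x hx
      rcases hEl l with h | h
      · rw [h, Submodule.bot_orthogonal_eq_top]
        exact Submodule.mem_top
      · have hx0 : x = 0 := by
          apply Subtype.ext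
          rw [h, Submodule.top_orthogonal_eq_bot] at hx
          simpa using hx
        rw [hx0, map_zero]
        simpa using ((Q.E l)ᗮ).zero_mem
  -- local complete positivity of φL
  have hφcp : IsLocalCP P Q φL := by
    intro l
    obtain ⟨α, hα⟩ := hπbdd l
    refine ⟨α, ?_⟩
    intro n M hM x hx
    have hxE : ∀ i, ((Vmap (x i) : Q.Dom) : H) ∈ Q.E l := by
      intro i; rw [hVcompat]; exact hVE l _ (hx i)
    have hrw : ∀ i j, ⟪((x i : Q.Dom) : H), ((φL (M i j) (x j) : Q.Dom) : H)⟫_ℂ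
        = ⟪((Vmap (x i) : Q.Dom) : H), ((π (M i j) (Vmap (x j)) : Q.Dom) : H)⟫_ℂ := by
      intro i j
      rw [hφval, ContinuousLinearMap.adjoint_inner_right, ← hVcompat]
    simp only [hrw]
    exact hπCP l α hα n M hM (fun i => Vmap (x i)) hxE
  -- agreement with π on S
  have hag : ∀ s : S, φL (s : A) = π (s : A) := by
    intro s
    apply LinearMap.ext; intro x
    apply Subtype.ext
    rw [hφval]
    exact (hdilS s x).symm
  -- unique extension
  have hφeq : ∀ a, φL a = π a := huep φL hφced hφcp hag
  have hkey : ∀ (a : A) (x : Q.Dom), ((π a x : Q.Dom) : H)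
      = (ContinuousLinearMap.adjoint V) ((π a (Vmap x) : Q.Dom) : H) := by
    intro a x
    conv_lhs => rw [← hφeq a]
    exact hφval a x
  -- V commutes with π
  let Viso : H →ₗᵢ[ℂ] H := ⟨(V : H →ₗ[ℂ] H), hiso⟩
  have hVinner : ∀ u w : H, ⟪V u, V w⟫_ℂ = ⟪u, w⟫_ℂ := fun u w => Viso.inner_map_map u w
  have hsq : ∀ (b : A) (z : Q.Dom), ⟪((π b z : Q.Dom) : H), ((π b z : Q.Dom) : H)⟫_ℂ
      = ⟪(z : H), ((π (star b * b) z : Q.Dom) : H)⟫_ℂ := by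
    intro b z
    rw [hπmul, LinearMap.comp_apply]
    exact hπadj b z (π b z)
  have hcomm : ∀ (a : A) (x : Q.Dom),
      V ((π a x : Q.Dom) : H) = ((π a (Vmap x) : Q.Dom) : H) := by
    intro a x
    have h2 : ⟪V ((π a x : Q.Dom) : H), ((π a (Vmap x) : Q.Dom) : H)⟫_ℂ
        = ⟪((π a x : Q.Dom) : H), ((π a x : Q.Dom) : H)⟫_ℂ := by
      rw [← ContinuousLinearMap.adjoint_inner_right, ← hkey a x]
    have h1 : ⟪((π a (Vmap x) : Q.Dom) : H), ((π a (Vmap x) : Q.Dom) : H)⟫_ℂ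
        = ⟪((π a x : Q.Dom) : H), ((π a x : Q.Dom) : H)⟫_ℂ := by
      rw [hsq a (Vmap x), hsq a x, hkey (star a * a) x,
        ContinuousLinearMap.adjoint_inner_right, ← hVcompat]
    have h3 : ⟪((π a (Vmap x) : Q.Dom) : H), V ((π a x : Q.Dom) : H)⟫_ℂ
        = ⟪((π a x : Q.Dom) : H), ((π a x : Q.Dom) : H)⟫_ℂ := by
      rw [← inner_conj_symm, h2, inner_self_conj]
    have h4 : ⟪V ((π a x : Q.Dom) : H), V ((π a x : Q.Dom) : H)⟫_ℂ
        = ⟪((π a x : Q.Dom) : H), ((π a x : Q.Dom) : H)⟫_ℂ := hVinner _ _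
    have hz : ⟪((π a (Vmap x) : Q.Dom) : H) - V ((π a x : Q.Dom) : H),
        ((π a (Vmap x) : Q.Dom) : H) - V ((π a x : Q.Dom) : H)⟫_ℂ = 0 := by
      rw [inner_sub_left, inner_sub_right, inner_sub_right, h1, h2, h3, h4]
      ring
    have := inner_self_eq_zero.mp hz
    rw [sub_eq_zero] at this
    exact this.symm
  -- apply irreducibility to V
  obtain ⟨c, hc⟩ := hirr V hVE
    (by
      intro l x hx
      rcases hEl l with h | h
      · rw [h, Submodule.bot_orthogonal_eq_top]
        exact Submodule.mem_top
      · have hx0 : (x : H) = 0 := by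
          rw [h, Submodule.top_orthogonal_eq_bot] at hx
          simpa using hx
        rw [hx0, map_zero]
        exact ((Q.E l)ᗮ).zero_mem)
    (by
      intro a x y hyx
      have hxy : y = Vmap x := by
        apply Subtype.ext
        rw [hyx, ← hVcompat]
      rw [hxy]
      exact hcomm a x)
  -- conclude: V is unitary
  have hcv : ∀ v : H, V v = c • v := by
    intro v
    rw [hc]
    simp
  have hc1 : ‖c‖ = 1 := by
    have h := hiso v₀
    rw [hcv, norm_smul] at h
    have hv₀n : ‖v₀‖ ≠ 0 := norm_ne_zero_iff.mpr hv₀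
    field_simp at h
    exact h
  have hc0 : c ≠ 0 := by
    intro h
    rw [h, norm_zero] at hc1
    exact zero_ne_one hc1
  intro w
  refine ⟨c⁻¹ • w, ?_⟩
  rw [hcv, smul_smul, mul_inv_cancel₀ hc0, one_smul]
end

section
/- Let V₀ be the unilateral right shift on a separable Hilbert space K with orthonormal basis {e_n}, K_n = span{e₁,…,e_n}, H_n = K ⊕ K_n, E = {H_n}, D = ∪H_n, and V = V₀ ⊕ 1_K restricted to D. Let S = span{1_D, V|_D, V*} and B the locally C*-algebra generated by S in C*_E(D). Then the map ψ(a) = V*aV|_D is a unital local completely positive map on B agreeing with the identity on S but ψ ≠ id_B; in particular ψ(VV*) = I_D ≠ VV*, so the identity representation of B fails the local unique extension property for S. -/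
open scoped ComplexOrder InnerProductSpace

/-- The shift example: for `V = V₀ ⊕ 1` on `H = K ⊕₂ K` with the quantized domain
`H_n = K ⊕ K_n`, the compression `ψ(a) = V* a V|_D` is a unital local CP map on the
locally C*-algebra `B` generated by `S = span{1, V, V*}` which agrees with the
identity on `S`, yet `ψ(V V*) = 1 ≠ V V*`; so the identity representation of `B`
fails the local unique extension property for `S`. -/
theorem stmt18_shift_counterexample
    {K : Type} [NormedAddCommGroup K] [InnerProductSpace ℂ K] [CompleteSpace K]
    (e : ℕ → K) (hON : Orthonormal ℂ e)
    (hCB : (Submodule.span ℂ (Set.range e)).topologicalClosure = ⊤)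
    -- the unilateral right shift on `K`
    (V₀ : K →L[ℂ] K) (hV₀ : ∀ n : ℕ, V₀ (e n) = e (n + 1))
    -- the quantized domain `E = {K ⊕ K_n}` in `H = K ⊕₂ K`
    (Q : QuantizedDomain (WithLp 2 (K × K)) ℕ)
    (hQE : ∀ n : ℕ, Q.E n = (Submodule.prod (⊤ : Submodule ℂ K)
        (Submodule.span ℂ (e '' {i : ℕ | i < n}))).comap
        (WithLp.linearEquiv 2 ℂ (K × K)).toLinearMap)
    -- `V = V₀ ⊕ 1_K` as a bounded operator on `H`
    (Vfull : WithLp 2 (K × K) →L[ℂ] WithLp 2 (K × K))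
    (hVfull : ∀ x y : K, (WithLp.linearEquiv 2 ℂ (K × K)) (Vfull
        ((WithLp.linearEquiv 2 ℂ (K × K)).symm (x, y))) = (V₀ x, y))
    -- `V|_D` and its adjoint `V*|_D` as operators on the union space
    (Vop : Module.End ℂ Q.Dom)
    (hVop : ∀ x : Q.Dom, ((Vop x : Q.Dom) : WithLp 2 (K × K)) = Vfull (x : WithLp 2 (K × K)))
    (Vadj : Module.End ℂ Q.Dom)
    (hVadj : ∀ x : Q.Dom, ((Vadj x : Q.Dom) : WithLp 2 (K × K)) =
      (ContinuousLinearMap.adjoint Vfull) (x : WithLp 2 (K × K)))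
    -- `B`: the locally C*-algebra generated by `S = span{1, V, V*}` in `C*_E(D)`
    (B : Subalgebra ℂ (Module.End ℂ Q.Dom))
    (hVB : Vop ∈ B) (hVadjB : Vadj ∈ B)
    (hBmem : ∀ b ∈ B, Q.MemCED b) :
    -- `V|_D ∈ C*_E(D)`
    Q.MemCED Vop ∧
    -- `ψ` is unital:  `ψ(1) = V* V = 1`
    Vadj * Vop = 1 ∧
    -- `ψ` is local completely positive on `B`
    (∀ l : ℕ, ∃ α : ℕ, ∀ (n : ℕ) (M : Fin n → Fin n → Module.End ℂ Q.Dom),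
      (∀ i j, M i j ∈ B) → Q.MatPosAt α M →
        Q.MatPosAt l (fun i j => Vadj * M i j * Vop)) ∧
    -- `ψ` agrees with the identity on `S = span{1, V, V*}`
    (∀ c₁ c₂ c₃ : ℂ,
      Vadj * (c₁ • 1 + c₂ • Vop + c₃ • Vadj) * Vop = c₁ • 1 + c₂ • Vop + c₃ • Vadj) ∧
    -- but `ψ(V V*) = 1 ≠ V V*`, so `ψ ≠ id_B`
    (Vadj * (Vop * Vadj) * Vop = 1 ∧ Vop * Vadj ≠ 1) := by
  
  set H := WithLp 2 (K × K)
  set L := WithLp.linearEquiv 2 ℂ (K × K) with hL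
  have hone := orthonormal_iff_ite.mp hON
  -- density of the span of the basis
  have hdense : Dense ((Submodule.span ℂ (Set.range e) : Submodule ℂ K) : Set K) := by
    rw [Submodule.dense_iff_topologicalClosure_eq_top]; exact hCB
  -- a CLM ext principle on the basis
  have extK : ∀ {f g : K →L[ℂ] ℂ}, (∀ n, f (e n) = g (e n)) → f = g := by
    intro f g h
    refine ContinuousLinearMap.ext_on hdense ?_
    rintro _ ⟨n, rfl⟩; exact h n
  -- Step 1: ⟪e (n+1), V₀ x⟫ = ⟪e n, x⟫
  have step1 : ∀ (n : ℕ) (x : K), ⟪e (n + 1), V₀ x⟫_ℂ = ⟪e n, x⟫_ℂ := by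
    intro n x
    have key : (innerSL ℂ (e (n + 1))).comp V₀ = innerSL ℂ (e n) := by
      apply extK; intro m
      simp only [ContinuousLinearMap.comp_apply, innerSL_apply_apply, hV₀]
      rw [hone, hone]
      by_cases hnm : n = m
      · simp [hnm]
      · rw [if_neg (by omega), if_neg hnm]
    exact DFunLike.congr_fun key x
  -- Step 2: V₀ preserves inner products
  have step2 : ∀ a b : K, ⟪V₀ a, V₀ b⟫_ℂ = ⟪a, b⟫_ℂ := by
    have half : ∀ (b x : K), ⟪b, x⟫_ℂ = ⟪V₀ b, V₀ x⟫_ℂ := by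
      intro b x
      have key : innerSL ℂ b = (innerSL ℂ (V₀ b)).comp V₀ := by
        apply extK; intro m
        simp only [ContinuousLinearMap.comp_apply, innerSL_apply_apply, hV₀]
        rw [← inner_conj_symm (V₀ b) (e (m + 1)), step1 m b, inner_conj_symm]
      exact DFunLike.congr_fun key x
    intro a b; exact (half a b).symm
  -- the key computation for Vfull on a general vector
  have hVgen : ∀ u : H, L (Vfull u) = (V₀ (Prod.fst (L u)), Prod.snd (L u)) := by
    intro u
    have := hVfull (Prod.fst (L u)) (Prod.snd (L u))
    rwa [show ((Prod.fst (L u), Prod.snd (L u)) : K × K) = L u from rfl,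
      L.symm_apply_apply] at this
  -- Vfull preserves inner products
  have hViso : ∀ u v : H, ⟪Vfull u, Vfull v⟫_ℂ = ⟪u, v⟫_ℂ := by
    intro u v
    calc ⟪Vfull u, Vfull v⟫_ℂ
        = ⟪Prod.fst (L (Vfull u)), Prod.fst (L (Vfull v))⟫_ℂ
          + ⟪Prod.snd (L (Vfull u)), Prod.snd (L (Vfull v))⟫_ℂ :=
          WithLp.prod_inner_apply _ _
      _ = ⟪V₀ (Prod.fst (L u)), V₀ (Prod.fst (L v))⟫_ℂ
          + ⟪Prod.snd (L u), Prod.snd (L v)⟫_ℂ := by rw [hVgen u, hVgen v]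
      _ = ⟪Prod.fst (L u), Prod.fst (L v)⟫_ℂ
          + ⟪Prod.snd (L u), Prod.snd (L v)⟫_ℂ := by rw [step2]
      _ = ⟪u, v⟫_ℂ := (WithLp.prod_inner_apply _ _).symm
  -- V* V = 1 on H
  have hadjV : ∀ u : H, (ContinuousLinearMap.adjoint Vfull) (Vfull u) = u := by
    intro u
    refine ext_inner_right ℂ fun v => ?_
    rw [ContinuousLinearMap.adjoint_inner_left, hViso]
  -- (1) MemCED Vop
  have memced : Q.MemCED Vop := by
    refine ⟨?_, ?_, ?_⟩
    · intro l x hx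
      rw [hQE l] at hx ⊢
      rw [Submodule.mem_comap, Submodule.mem_prod] at hx ⊢
      rw [hVop, LinearEquiv.coe_coe, hVgen]
      exact ⟨trivial, hx.2⟩
    · intro l
      refine ⟨‖Vfull‖, norm_nonneg _, fun x _ => ?_⟩
      rw [hVop]; exact Vfull.le_opNorm _
    · intro l x hx
      have hxo := (Submodule.mem_orthogonal _ _).1 hx
      have hx1 : Prod.fst (L (x : H)) = 0 := by
        set u0 : H := L.symm ((Prod.fst (L (x : H)), 0) : K × K) with hu0
        have h0 : u0 ∈ Q.E l := by
          rw [hQE l, Submodule.mem_comap, LinearEquiv.coe_coe, hu0, L.apply_symm_apply, Submodule.mem_prod]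
          exact ⟨trivial, Submodule.zero_mem _⟩
        have hz := hxo u0 h0
        have hexp : ⟪u0, (x : H)⟫_ℂ
            = ⟪Prod.fst (L u0), Prod.fst (L (x : H))⟫_ℂ
              + ⟪Prod.snd (L u0), Prod.snd (L (x : H))⟫_ℂ := WithLp.prod_inner_apply _ _
        rw [hexp, hu0, L.apply_symm_apply] at hz
        simp only [inner_zero_left, add_zero] at hz
        exact inner_self_eq_zero.mp hz
      have hfix : Vfull (x : H) = (x : H) := by
        apply L.injective
        rw [hVgen]
        refine Prod.ext ?_ rfl
        show V₀ (Prod.fst (L (x : H))) = Prod.fst (L (x : H))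
        rw [hx1, map_zero]
      rw [hVop, hfix]; exact hx
  -- (2) V* V = 1 on D
  have hunit : Vadj * Vop = 1 := by
    apply LinearMap.ext; intro x
    apply Subtype.coe_injective
    show ((Vadj (Vop x) : Q.Dom) : H) = (x : H)
    rw [hVadj, hVop, hadjV]
  refine ⟨memced, hunit, ?_, ?_, ?_, ?_⟩
  -- (3) local CP
  · intro l
    refine ⟨l, fun n M _ hpos x hx => ?_⟩
    have key : ∀ i j, ⟪((x i : Q.Dom) : H), (((Vadj * M i j * Vop) (x j) : Q.Dom) : H)⟫_ℂ
        = ⟪((Vop (x i) : Q.Dom) : H), ((M i j (Vop (x j)) : Q.Dom) : H)⟫_ℂ := by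
      intro i j
      show ⟪((x i : Q.Dom) : H), ((Vadj ((M i j) (Vop (x j))) : Q.Dom) : H)⟫_ℂ = _
      rw [hVadj, ContinuousLinearMap.adjoint_inner_right, hVop]
    simp only [key]
    exact hpos (fun i => Vop (x i)) fun i => memced.1 l (x i) (hx i)
  -- (4) agreement on S
  · have h2 : Vadj * (Vop * Vop) = Vop := by rw [← mul_assoc, hunit, one_mul]
    have h3 : Vadj * (Vadj * Vop) = Vadj := by rw [hunit, mul_one]
    intro c₁ c₂ c₃
    simp only [mul_add, add_mul, mul_smul_comm, smul_mul_assoc, mul_one, one_mul,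
      mul_assoc, hunit, h2, h3]
  -- (5a) ψ(V V*) = 1
  · calc Vadj * (Vop * Vadj) * Vop = (Vadj * Vop) * (Vadj * Vop) := by
          rw [mul_assoc, mul_assoc, mul_assoc]
      _ = 1 := by rw [hunit, one_mul]
  -- (5b) V V* ≠ 1
  · intro hcontra
    set v : H := L.symm ((e 0, 0) : K × K) with hv
    have hvE : v ∈ Q.E 0 := by
      rw [hQE 0, Submodule.mem_comap, LinearEquiv.coe_coe, hv, L.apply_symm_apply, Submodule.mem_prod]
      exact ⟨trivial, Submodule.zero_mem _⟩
    have hvD : v ∈ Q.Dom := (le_iSup Q.E 0) hvE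
    set x : Q.Dom := ⟨v, hvD⟩ with hxdef
    have happ : ((Vop (Vadj x) : Q.Dom) : H) = (x : H) := by
      show (((Vop * Vadj) x : Q.Dom) : H) = (x : H)
      rw [hcontra]; rfl
    have happ' : Vfull ((ContinuousLinearMap.adjoint Vfull) v) = v := by
      have := happ
      rwa [hVop, hVadj] at this
    -- ⟪v, Vfull w⟫ = 0 for all w
    have horth : ∀ w : H, ⟪v, Vfull w⟫_ℂ = 0 := by
      intro w
      have hexp : ⟪v, Vfull w⟫_ℂ
          = ⟪Prod.fst (L v), Prod.fst (L (Vfull w))⟫_ℂ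
            + ⟪Prod.snd (L v), Prod.snd (L (Vfull w))⟫_ℂ := WithLp.prod_inner_apply _ _
      rw [hexp, hVgen w, hv, L.apply_symm_apply]
      show ⟪e 0, V₀ (Prod.fst (L w))⟫_ℂ + ⟪(0 : K), Prod.snd (L w)⟫_ℂ = 0
      rw [inner_zero_left, add_zero]
      have key : (innerSL ℂ (e 0)).comp V₀ = 0 := by
        apply extK; intro m
        simp only [ContinuousLinearMap.comp_apply, innerSL_apply_apply, hV₀,
          ContinuousLinearMap.zero_apply]
        rw [hone, if_neg (by omega)]
      exact DFunLike.congr_fun key (Prod.fst (L w))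
    have h1 : ⟪v, v⟫_ℂ = 0 := by
      have := horth ((ContinuousLinearMap.adjoint Vfull) v)
      rwa [happ'] at this
    rw [inner_self_eq_zero] at h1
    have h2 : L v = 0 := by rw [h1, map_zero]
    rw [hv, L.apply_symm_apply] at h2
    exact hON.ne_zero 0 (congrArg Prod.fst h2)
end
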